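/- arXiv:1310.4862 — 3 statements merged into one kernel-verified Lean document; each statement's English description precedes it below -/
import Mathlib

section
/- Let G = G* ∈ E(τ;I) be a hermitian element such that |||G − (3/2)I||| ≤ 1 (so in particular G is positive and invertible). Then G^{1/2} ∈ E(τ;I), and there is a universal constant C (independent of G, X, τ, I) such that |||[G^{1/2}, X]||| ≤ C |||[G, X]||| for every X ∈ E(τ;I), and |[G^{1/2}, τ]|_I ≤ C |[G, τ]|_I. -/
noncomputable section

open Filter Topology

/-- The algebra `B(H)` of bounded operators on `H`. -/
abbrev Op (H : Type) [NormedAddCommGroup H] [InnerProductSpace ℂ H] : Type := H →L[ℂ] H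

variable {H : Type} [NormedAddCommGroup H] [InnerProductSpace ℂ H] [CompleteSpace H]

/-- `X` is a finite-rank operator (`X ∈ R(H)`). -/
def FinRank (X : Op H) : Prop :=
  FiniteDimensional ℂ (LinearMap.range (X : H →ₗ[ℂ] H))

/-- `P` is a finite-rank orthogonal projection (`P ∈ P(H)`). -/
def IsFinProj (P : Op H) : Prop :=
  FinRank P ∧ IsSelfAdjoint P ∧ P * P = P

/-- The Loewner order `A ≤ B` on hermitian operators. -/
def opLE (A B : Op H) : Prop := (B - A).IsPositive

/-- `R_1^+(H) = {A ∈ R(H) : 0 ≤ A ≤ I}`. -/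
def R1plus (H : Type) [NormedAddCommGroup H] [InnerProductSpace ℂ H] [CompleteSpace H] :
    Set (Op H) :=
  {A | FinRank A ∧ A.IsPositive ∧ ((1 : Op H) - A).IsPositive}

/-- A (symmetrically) normed ideal `(I, |·|_I)` of compact operators on `H`. -/
structure SymmNormedIdeal (H : Type) [NormedAddCommGroup H] [InnerProductSpace ℂ H]
    [CompleteSpace H] : Type where
  carrier : Set (Op H)
  nrm : Op H → ℝ
  nontrivial' : ∃ X ∈ carrier, X ≠ 0
  compact' : ∀ X ∈ carrier, IsCompactOperator (X : H → H)
  finRank_mem' : ∀ X : Op H, FinRank X → X ∈ carrier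
  zero_mem' : (0 : Op H) ∈ carrier
  add_mem' : ∀ X ∈ carrier, ∀ Y ∈ carrier, X + Y ∈ carrier
  smul_mem' : ∀ (c : ℂ), ∀ X ∈ carrier, c • X ∈ carrier
  mul_mem_left' : ∀ (A : Op H), ∀ X ∈ carrier, A * X ∈ carrier
  mul_mem_right' : ∀ (A : Op H), ∀ X ∈ carrier, X * A ∈ carrier
  adjoint_mem' : ∀ X ∈ carrier, ContinuousLinearMap.adjoint X ∈ carrier
  nrm_nonneg' : ∀ X : Op H, 0 ≤ nrm X
  nrm_zero' : nrm 0 = 0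
  nrm_eq_zero' : ∀ X ∈ carrier, nrm X = 0 → X = 0
  nrm_add_le' : ∀ X ∈ carrier, ∀ Y ∈ carrier, nrm (X + Y) ≤ nrm X + nrm Y
  nrm_smul' : ∀ (c : ℂ) (X : Op H), nrm (c • X) = ‖c‖ * nrm X
  nrm_mul_left' : ∀ (A : Op H), ∀ X ∈ carrier, nrm (A * X) ≤ ‖A‖ * nrm X
  nrm_mul_right' : ∀ (A : Op H), ∀ X ∈ carrier, nrm (X * A) ≤ nrm X * ‖A‖
  opNorm_le_nrm' : ∀ X ∈ carrier, ‖X‖ ≤ nrm X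
  nrm_adjoint' : ∀ X : Op H, nrm (ContinuousLinearMap.adjoint X) = nrm X
  nrm_rank_le_one' : ∀ X : Op H, FinRank X →
    Module.finrank ℂ (LinearMap.range (X : H →ₗ[ℂ] H)) ≤ 1 → nrm X = ‖X‖
  complete' : ∀ f : ℕ → Op H, (∀ k, f k ∈ carrier) →
    (∀ ε : ℝ, 0 < ε → ∃ N, ∀ m ≥ N, ∀ k ≥ N, nrm (f m - f k) < ε) →
    ∃ X ∈ carrier, Tendsto (fun k => nrm (f k - X)) atTop (nhds 0)

variable {n : ℕ}

/-- `|[X,τ]|_I = max_j |[X,T_j]|_I`. -/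
def commNrm (I : SymmNormedIdeal H) (τ : Fin n → Op H) (X : Op H) : ℝ :=
  ⨆ j, I.nrm (X * τ j - τ j * X)

/-- `X ∈ E(τ;I)`, i.e. `[X,T_j] ∈ I` for all `j`. -/
def memE (I : SymmNormedIdeal H) (τ : Fin n → Op H) (X : Op H) : Prop :=
  ∀ j, X * τ j - τ j * X ∈ I.carrier

/-- the norm `|||X||| = ‖X‖ + |[X,τ]|_I` on `E(τ;I)`. -/
def tnorm (I : SymmNormedIdeal H) (τ : Fin n → Op H) (X : Op H) : ℝ :=
  ‖X‖ + commNrm I τ X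

/-- `X ∈ K(τ;I) = E(τ;I) ∩ K(H)`. -/
def memK (I : SymmNormedIdeal H) (τ : Fin n → Op H) (X : Op H) : Prop :=
  memE I τ X ∧ IsCompactOperator (X : H → H)

/-- The filter of the upward-directed order on `R_1^+(H)`. -/
def dirFilter (H : Type) [NormedAddCommGroup H] [InnerProductSpace ℂ H] [CompleteSpace H] :
    Filter (R1plus H) :=
  ⨅ A₀ : R1plus H, Filter.principal {A : R1plus H | opLE (A₀ : Op H) (A : Op H)}

/-- `k_I(τ) = liminf_{A ∈ R_1^+(H)} |[A,τ]|_I`. -/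
def kI (I : SymmNormedIdeal H) (τ : Fin n → Op H) : ℝ :=
  liminf (fun A : R1plus H => commNrm I τ (A : Op H)) (dirFilter H)

/-- `R(H)` is dense in `I`, i.e. `I = I⁰`. -/
def FRDense (I : SymmNormedIdeal H) : Prop :=
  ∀ X ∈ I.carrier, ∀ ε : ℝ, 0 < ε → ∃ R : Op H, FinRank R ∧ I.nrm (X - R) < ε

/-- the essential norm `‖p(X)‖`, the norm of the image of `X` in the Calkin algebra. -/
def essNorm (X : Op H) : ℝ :=
  sInf {c : ℝ | ∃ K : Op H, IsCompactOperator (K : H → H) ∧ c = ‖X - K‖}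

/-!
`E(τ;I)` is a Banach algebra under `|||·|||`. Write `G = (3/2)(1 - a)`, so `|||a||| ≤ 2/3`.
The iteration `y₀ = 0`, `y_{k+1} = (a + y_k²)/2` stays in the `|||·|||`-ball of radius `1/2`,
where it contracts by the factor `1/2`; its limit `y` solves `(1 - y)² = 1 - a`, and since
`‖y‖ ≤ 1/2` the operator `√(3/2) (1 - y)` is the positive square root of `G`.
Any seminorm `p` on `E(τ;I)` that kills `1` and obeys the Leibniz rule
`p(YZ) ≤ |||Y||| p(Z) + p(Y) |||Z|||`, such as `|[·,τ]|_I` or `|||[·,X]|||`, satisfies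
`p(y_{k+1}) ≤ (p(a) + p(y_k))/2`, hence `p(y) ≤ p(a)`; this gives both estimates with `C = 1`.
-/

lemma IsSelfAdjoint.isPositive_one_sub {y : Op H} (hy : IsSelfAdjoint y) (hy1 : ‖y‖ ≤ 1) :
    (1 - y).IsPositive := by
  rw [← ContinuousLinearMap.nonneg_iff_isPositive, sub_nonneg]
  calc y ≤ algebraMap ℝ _ ‖y‖ := hy.le_algebraMap_norm_self
    _ ≤ algebraMap ℝ _ 1 := algebraMap_mono _ hy1
    _ = 1 := map_one _

lemma ContinuousLinearMap.IsPositive.eq_of_mul_self_eq {S T : Op H} (hS : S.IsPositive)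
    (hT : T.IsPositive) (h : S * S = T * T) : S = T := by
  rw [← ContinuousLinearMap.nonneg_iff_isPositive] at hS hT
  rw [← CFC.sqrt_unique rfl hS, h, CFC.sqrt_unique rfl hT]

variable {I : SymmNormedIdeal H} {τ : Fin n → Op H}

namespace SymmNormedIdeal

lemma sub_mem {X Y : Op H} (hX : X ∈ I.carrier) (hY : Y ∈ I.carrier) : X - Y ∈ I.carrier := by
  simpa [sub_eq_add_neg] using I.add_mem' X hX _ (I.smul_mem' (-1) Y hY)

lemma tendsto_of_tendsto_nrm_sub {Z : ℕ → Op H} {W : Op H} (hZ : ∀ k, Z k ∈ I.carrier)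
    (hW : W ∈ I.carrier) (hZW : Tendsto (fun k => I.nrm (Z k - W)) atTop (𝓝 0)) :
    Tendsto Z atTop (𝓝 W) :=
  tendsto_iff_norm_sub_tendsto_zero.2 <|
    squeeze_zero (fun _ => norm_nonneg _) (fun k => I.opNorm_le_nrm' _ (I.sub_mem (hZ k) hW)) hZW

end SymmNormedIdeal

section Commutator

variable {A : Type*} [Ring A]

lemma comm_add (X Y T : A) :
    (X + Y) * T - T * (X + Y) = (X * T - T * X) + (Y * T - T * Y) := by noncomm_ring

lemma comm_sub (X Y T : A) :
    (X - Y) * T - T * (X - Y) = (X * T - T * X) - (Y * T - T * Y) := by noncomm_ring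

lemma comm_smul [Algebra ℂ A] (c : ℂ) (X T : A) :
    (c • X) * T - T * (c • X) = c • (X * T - T * X) := by
  rw [smul_mul_assoc, mul_smul_comm, smul_sub]

lemma comm_mul (X Y T : A) :
    (X * Y) * T - T * (X * Y) = X * (Y * T - T * Y) + (X * T - T * X) * Y := by noncomm_ring

end Commutator

namespace memE

lemma zero : memE I τ 0 := fun _ => by simpa using I.zero_mem'

lemma one : memE I τ 1 := fun _ => by simpa using I.zero_mem'

lemma add {X Y : Op H} (hX : memE I τ X) (hY : memE I τ Y) : memE I τ (X + Y) := fun j => by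
  rw [comm_add]; exact I.add_mem' _ (hX j) _ (hY j)

lemma sub {X Y : Op H} (hX : memE I τ X) (hY : memE I τ Y) : memE I τ (X - Y) := fun j => by
  rw [comm_sub]; exact I.sub_mem (hX j) (hY j)

lemma smul (c : ℂ) {X : Op H} (hX : memE I τ X) : memE I τ (c • X) := fun j => by
  rw [comm_smul]; exact I.smul_mem' c _ (hX j)

lemma mul {X Y : Op H} (hX : memE I τ X) (hY : memE I τ Y) : memE I τ (X * Y) := fun j => by
  rw [comm_mul]
  exact I.add_mem' _ (I.mul_mem_left' X _ (hY j)) _ (I.mul_mem_right' Y _ (hX j))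

end memE

section Norms

lemma commNrm_nonneg (X : Op H) : 0 ≤ commNrm I τ X :=
  Real.iSup_nonneg fun _ => I.nrm_nonneg' _

lemma nrm_le_commNrm (X : Op H) (j : Fin n) : I.nrm (X * τ j - τ j * X) ≤ commNrm I τ X :=
  le_ciSup (f := fun j => I.nrm (X * τ j - τ j * X)) (Set.finite_range _).bddAbove j

lemma commNrm_le_sum (X : Op H) : commNrm I τ X ≤ ∑ j, I.nrm (X * τ j - τ j * X) :=
  Real.iSup_le (fun j => Finset.single_le_sum (f := fun j => I.nrm (X * τ j - τ j * X))
      (fun _ _ => I.nrm_nonneg' _) (Finset.mem_univ j))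
    (Finset.sum_nonneg fun _ _ => I.nrm_nonneg' _)

lemma commNrm_one : commNrm I τ 1 = 0 := by
  simp [commNrm, I.nrm_zero']

lemma commNrm_smul (c : ℂ) (X : Op H) : commNrm I τ (c • X) = ‖c‖ * commNrm I τ X := by
  simp only [commNrm, comm_smul, I.nrm_smul', Real.mul_iSup_of_nonneg (norm_nonneg c)]

lemma commNrm_add_le {X Y : Op H} (hX : memE I τ X) (hY : memE I τ Y) :
    commNrm I τ (X + Y) ≤ commNrm I τ X + commNrm I τ Y :=
  Real.iSup_le (fun j => by
      rw [comm_add]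
      exact (I.nrm_add_le' _ (hX j) _ (hY j)).trans
        (add_le_add (nrm_le_commNrm X j) (nrm_le_commNrm Y j)))
    (add_nonneg (commNrm_nonneg X) (commNrm_nonneg Y))

lemma commNrm_mul_le {X Y : Op H} (hX : memE I τ X) (hY : memE I τ Y) :
    commNrm I τ (X * Y) ≤ ‖X‖ * commNrm I τ Y + commNrm I τ X * ‖Y‖ := by
  refine Real.iSup_le (fun j => ?_) (add_nonneg (mul_nonneg (norm_nonneg _) (commNrm_nonneg _))
    (mul_nonneg (commNrm_nonneg _) (norm_nonneg _)))
  rw [comm_mul]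
  calc I.nrm (X * (Y * τ j - τ j * Y) + (X * τ j - τ j * X) * Y)
      ≤ I.nrm (X * (Y * τ j - τ j * Y)) + I.nrm ((X * τ j - τ j * X) * Y) :=
        I.nrm_add_le' _ (I.mul_mem_left' X _ (hY j)) _ (I.mul_mem_right' Y _ (hX j))
    _ ≤ ‖X‖ * I.nrm (Y * τ j - τ j * Y) + I.nrm (X * τ j - τ j * X) * ‖Y‖ :=
        add_le_add (I.nrm_mul_left' X _ (hY j)) (I.nrm_mul_right' Y _ (hX j))
    _ ≤ ‖X‖ * commNrm I τ Y + commNrm I τ X * ‖Y‖ := by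
        gcongr <;> exact nrm_le_commNrm _ j

lemma norm_le_tnorm (X : Op H) : ‖X‖ ≤ tnorm I τ X :=
  le_add_of_nonneg_right (commNrm_nonneg X)

lemma commNrm_le_tnorm (X : Op H) : commNrm I τ X ≤ tnorm I τ X :=
  le_add_of_nonneg_left (norm_nonneg X)

lemma tnorm_nonneg (X : Op H) : 0 ≤ tnorm I τ X :=
  add_nonneg (norm_nonneg X) (commNrm_nonneg X)

lemma tnorm_zero : tnorm I τ (0 : Op H) = 0 := by
  simp [tnorm, commNrm, I.nrm_zero']

lemma tnorm_smul (c : ℂ) (X : Op H) : tnorm I τ (c • X) = ‖c‖ * tnorm I τ X := by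
  rw [tnorm, tnorm, commNrm_smul, norm_smul, mul_add]

lemma tnorm_sub_comm (X Y : Op H) : tnorm I τ (X - Y) = tnorm I τ (Y - X) := by
  rw [← neg_sub, ← neg_one_smul ℂ, tnorm_smul, norm_neg, norm_one, one_mul]

lemma tnorm_add_le {X Y : Op H} (hX : memE I τ X) (hY : memE I τ Y) :
    tnorm I τ (X + Y) ≤ tnorm I τ X + tnorm I τ Y := by
  have := commNrm_add_le hX hY
  have := norm_add_le X Y
  unfold tnorm; linarith

lemma tnorm_sub_le {X Y : Op H} (hX : memE I τ X) (hY : memE I τ Y) :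
    tnorm I τ (X - Y) ≤ tnorm I τ X + tnorm I τ Y := by
  have h := tnorm_add_le hX (memE.smul (-1) hY)
  rwa [tnorm_smul, norm_neg, norm_one, one_mul, neg_one_smul, ← sub_eq_add_neg] at h

lemma tnorm_mul_le {X Y : Op H} (hX : memE I τ X) (hY : memE I τ Y) :
    tnorm I τ (X * Y) ≤ tnorm I τ X * tnorm I τ Y := by
  have := commNrm_mul_le hX hY
  have := norm_mul_le X Y
  have := commNrm_nonneg (I := I) (τ := τ) X
  have := commNrm_nonneg (I := I) (τ := τ) Y
  unfold tnorm; nlinarith [norm_nonneg X, norm_nonneg Y]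

end Norms

theorem exists_memE_tendsto_tnorm_sub {f : ℕ → Op H} (hf : ∀ k, memE I τ (f k))
    (hcauchy : ∀ ε > 0, ∃ N, ∀ m ≥ N, ∀ k ≥ N, tnorm I τ (f m - f k) < ε) :
    ∃ y, memE I τ y ∧ Tendsto (fun k => tnorm I τ (f k - y)) atTop (𝓝 0) := by
  have hf_cauchy : CauchySeq f := Metric.cauchySeq_iff'.2 fun ε hε =>
    (hcauchy ε hε).imp fun N hN m hm => by
      rw [dist_eq_norm]; exact (norm_le_tnorm _).trans_lt (hN m hm N le_rfl)
  obtain ⟨y, hy⟩ := cauchySeq_tendsto_of_complete hf_cauchy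
  have hcomm : ∀ j, y * τ j - τ j * y ∈ I.carrier ∧
      Tendsto (fun k => I.nrm ((f k - y) * τ j - τ j * (f k - y))) atTop (𝓝 0) := by
    intro j
    obtain ⟨W, hW, hfW⟩ := I.complete' (fun k => f k * τ j - τ j * f k) (fun k => hf k j)
      fun ε hε => (hcauchy ε hε).imp fun N hN m hm k hk => by
        rw [← comm_sub]
        exact (nrm_le_commNrm _ j).trans_lt ((commNrm_le_tnorm _).trans_lt (hN m hm k hk))
    obtain rfl : W = y * τ j - τ j * y := tendsto_nhds_unique
      (I.tendsto_of_tendsto_nrm_sub (fun k => hf k j) hW hfW)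
      ((hy.mul_const _).sub (hy.const_mul _))
    exact ⟨hW, by simpa only [comm_sub] using hfW⟩
  refine ⟨y, fun j => (hcomm j).1, ?_⟩
  have hnorm := tendsto_iff_norm_sub_tendsto_zero.1 hy
  have hsum := tendsto_finsetSum Finset.univ fun j _ => (hcomm j).2
  rw [Finset.sum_const_zero] at hsum
  simpa only [tnorm, add_zero] using hnorm.add <|
    squeeze_zero (fun _ => commNrm_nonneg _) (fun k => commNrm_le_sum (f k - y)) hsum

structure IsLeibnizSeminorm (I : SymmNormedIdeal H) (τ : Fin n → Op H) (p : Op H → ℝ) :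
    Prop where
  nonneg : ∀ Y, 0 ≤ p Y
  map_one : p 1 = 0
  smul : ∀ (c : ℂ) Y, p (c • Y) = ‖c‖ * p Y
  add_le : ∀ Y Z, memE I τ Y → memE I τ Z → p (Y + Z) ≤ p Y + p Z
  mul_le : ∀ Y Z, memE I τ Y → memE I τ Z →
    p (Y * Z) ≤ tnorm I τ Y * p Z + p Y * tnorm I τ Z
  le_tnorm : ∃ K, ∀ Y, memE I τ Y → p Y ≤ K * tnorm I τ Y

lemma isLeibnizSeminorm_commNrm : IsLeibnizSeminorm I τ (commNrm I τ) where
  nonneg := commNrm_nonneg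
  map_one := commNrm_one
  smul := commNrm_smul
  add_le _ _ := commNrm_add_le
  mul_le Y Z hY hZ := (commNrm_mul_le hY hZ).trans <| by
    gcongr
    · exact commNrm_nonneg Z
    · exact norm_le_tnorm Y
    · exact commNrm_nonneg Y
    · exact norm_le_tnorm Z
  le_tnorm := ⟨1, fun Y _ => by rw [one_mul]; exact commNrm_le_tnorm Y⟩

lemma isLeibnizSeminorm_tnorm_comm {X : Op H} (hX : memE I τ X) :
    IsLeibnizSeminorm I τ (fun Y => tnorm I τ (Y * X - X * Y)) where
  nonneg _ := tnorm_nonneg _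
  map_one := by simp [tnorm_zero]
  smul c Y := by simp only [comm_smul, tnorm_smul]
  add_le Y Z hY hZ := by
    simp only [comm_add]
    exact tnorm_add_le ((hY.mul hX).sub (hX.mul hY)) ((hZ.mul hX).sub (hX.mul hZ))
  mul_le Y Z hY hZ := by
    simp only [comm_mul]
    have hYX := (hY.mul hX).sub (hX.mul hY)
    have hZX := (hZ.mul hX).sub (hX.mul hZ)
    exact (tnorm_add_le (hY.mul hZX) (hYX.mul hZ)).trans
      (add_le_add (tnorm_mul_le hY hZX) (tnorm_mul_le hYX hZ))
  le_tnorm := ⟨2 * tnorm I τ X, fun Y hY => by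
    have := tnorm_sub_le (hY.mul hX) (hX.mul hY)
    have := tnorm_mul_le hY hX
    have := tnorm_mul_le hX hY
    linarith⟩

namespace IsLeibnizSeminorm

variable {p : Op H → ℝ}

lemma one_sub_le (hp : IsLeibnizSeminorm I τ p) {Y : Op H} (hY : memE I τ Y) :
    p (1 - Y) ≤ p Y := by
  have h := hp.add_le 1 _ memE.one (hY.smul (-1))
  rwa [hp.map_one, zero_add, hp.smul, norm_neg, norm_one, one_mul, neg_one_smul,
    ← sub_eq_add_neg] at h

lemma mul_self_le (hp : IsLeibnizSeminorm I τ p) {Y : Op H} (hY : memE I τ Y)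
    (hY2 : tnorm I τ Y ≤ 1 / 2) : p (Y * Y) ≤ p Y := by
  have := hp.mul_le Y Y hY hY
  have := hp.nonneg Y
  nlinarith

lemma le_of_tendsto (hp : IsLeibnizSeminorm I τ p) {f : ℕ → Op H} {y : Op H} {c : ℝ}
    (hf : ∀ k, memE I τ (f k)) (hy : memE I τ y)
    (hfy : Tendsto (fun k => tnorm I τ (f k - y)) atTop (𝓝 0)) (hfc : ∀ k, p (f k) ≤ c) :
    p y ≤ c := by
  obtain ⟨K, hK⟩ := hp.le_tnorm
  refine ge_of_tendsto' (by simpa using (hfy.const_mul K).const_add c) fun k => ?_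
  calc p y = p (f k + (y - f k)) := by rw [add_sub_cancel]
    _ ≤ p (f k) + p (y - f k) := hp.add_le _ _ (hf k) (hy.sub (hf k))
    _ ≤ c + K * tnorm I τ (f k - y) := by
        rw [tnorm_sub_comm]; exact add_le_add (hfc k) (hK _ (hy.sub (hf k)))

end IsLeibnizSeminorm

def sqrtIter {A : Type*} [Ring A] [Module ℂ A] (a : A) : ℕ → A
  | 0 => 0
  | k + 1 => (2⁻¹ : ℂ) • (a + sqrtIter a k * sqrtIter a k)

lemma IsSelfAdjoint.sqrtIter {A : Type*} [Ring A] [StarRing A] [Module ℂ A] [StarModule ℂ A]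
    {a : A} (ha : IsSelfAdjoint a) : ∀ k, IsSelfAdjoint (sqrtIter a k)
  | 0 => .zero A
  | k + 1 => by
      have hk := IsSelfAdjoint.sqrtIter ha k
      exact .smul (by simp [IsSelfAdjoint]) (ha.add ((hk.commute_iff hk).1 (Commute.refl _)))

section SqrtIter

variable {a : Op H}

lemma memE_sqrtIter (ha : memE I τ a) : ∀ k, memE I τ (sqrtIter a k)
  | 0 => memE.zero
  | k + 1 => memE.smul _ (ha.add ((memE_sqrtIter ha k).mul (memE_sqrtIter ha k)))

lemma tnorm_sqrtIter_le (ha : memE I τ a) (hat : tnorm I τ a ≤ 3 / 4) :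
    ∀ k, tnorm I τ (sqrtIter a k) ≤ 1 / 2
  | 0 => by simp [sqrtIter, tnorm_zero]
  | k + 1 => by
      have hk := tnorm_sqrtIter_le ha hat k
      have hkE := memE_sqrtIter ha k
      have := tnorm_mul_le hkE hkE
      have := tnorm_add_le ha (hkE.mul hkE)
      have := tnorm_nonneg (I := I) (τ := τ) (sqrtIter a k)
      rw [sqrtIter, tnorm_smul, norm_inv, Complex.norm_two]
      nlinarith

lemma tnorm_sqrtIter_add_sub_le (ha : memE I τ a) (hat : tnorm I τ a ≤ 3 / 4) :
    ∀ N m k, tnorm I τ (sqrtIter a (m + N) - sqrtIter a (k + N)) ≤ (1 / 2) ^ N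
  | 0, m, k => by
      have := tnorm_sub_le (memE_sqrtIter ha m) (memE_sqrtIter ha k)
      have := tnorm_sqrtIter_le ha hat m
      have := tnorm_sqrtIter_le ha hat k
      simp only [add_zero, pow_zero]
      linarith
  | N + 1, m, k => by
      set u := sqrtIter a (m + N)
      set v := sqrtIter a (k + N)
      have huE : memE I τ u := memE_sqrtIter ha _
      have hvE : memE I τ v := memE_sqrtIter ha _
      have hdiff : sqrtIter a (m + (N + 1)) - sqrtIter a (k + (N + 1))
          = (2⁻¹ : ℂ) • (u * (u - v) + (u - v) * v) := by
        rw [← add_assoc, ← add_assoc, sqrtIter, sqrtIter, ← smul_sub]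
        congr 1; noncomm_ring
      have hu := tnorm_sqrtIter_le ha hat (m + N)
      have hv := tnorm_sqrtIter_le ha hat (k + N)
      have huv := tnorm_sqrtIter_add_sub_le ha hat N m k
      have h1 := tnorm_mul_le huE (huE.sub hvE)
      have h2 := tnorm_mul_le (huE.sub hvE) hvE
      have h3 := tnorm_add_le (huE.mul (huE.sub hvE)) ((huE.sub hvE).mul hvE)
      have := tnorm_nonneg (I := I) (τ := τ) (u - v)
      rw [hdiff, tnorm_smul, norm_inv, Complex.norm_two, pow_succ]
      nlinarith

lemma sqrtIter_cauchy (ha : memE I τ a) (hat : tnorm I τ a ≤ 3 / 4) :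
    ∀ ε > 0, ∃ N, ∀ m ≥ N, ∀ k ≥ N, tnorm I τ (sqrtIter a m - sqrtIter a k) < ε := by
  intro ε hε
  obtain ⟨N, hN⟩ := exists_pow_lt_of_lt_one hε (by norm_num : (1 / 2 : ℝ) < 1)
  refine ⟨N, fun m hm k hk => ?_⟩
  obtain ⟨m, rfl⟩ := Nat.exists_eq_add_of_le' hm
  obtain ⟨k, rfl⟩ := Nat.exists_eq_add_of_le' hk
  exact (tnorm_sqrtIter_add_sub_le ha hat N m k).trans_lt hN

lemma IsLeibnizSeminorm.sqrtIter_le {p : Op H → ℝ} (hp : IsLeibnizSeminorm I τ p)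
    (ha : memE I τ a) (hat : tnorm I τ a ≤ 3 / 4) : ∀ k, p (sqrtIter a k) ≤ p a
  | 0 => by
      have h0 : p 0 = 0 := by simpa using hp.smul 0 0
      simpa [sqrtIter, h0] using hp.nonneg a
  | k + 1 => by
      have hkE := memE_sqrtIter ha k
      calc p (sqrtIter a (k + 1))
          = 2⁻¹ * p (a + sqrtIter a k * sqrtIter a k) := by
            rw [sqrtIter, hp.smul, norm_inv, Complex.norm_two]
        _ ≤ 2⁻¹ * (p a + p a) := by
            gcongr
            refine (hp.add_le _ _ ha (hkE.mul hkE)).trans (add_le_add le_rfl ?_)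
            exact (hp.mul_self_le hkE (tnorm_sqrtIter_le ha hat k)).trans
              (hp.sqrtIter_le ha hat k)
        _ = p a := by ring

theorem exists_sqrt_one_sub (ha : memE I τ a) (ha_sa : IsSelfAdjoint a)
    (hat : tnorm I τ a ≤ 3 / 4) :
    ∃ R, memE I τ R ∧ R.IsPositive ∧ R * R = 1 - a ∧
      ∀ p, IsLeibnizSeminorm I τ p → p R ≤ p a := by
  have hiterE := memE_sqrtIter ha
  obtain ⟨y, hyE, hy⟩ := exists_memE_tendsto_tnorm_sub hiterE (sqrtIter_cauchy ha hat)
  have hlim : Tendsto (sqrtIter a) atTop (𝓝 y) := tendsto_iff_norm_sub_tendsto_zero.2 <|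
    squeeze_zero (fun _ => norm_nonneg _) (fun _ => norm_le_tnorm _) hy
  have hfix : y = (2⁻¹ : ℂ) • (a + y * y) :=
    tendsto_nhds_unique (hlim.comp (tendsto_add_atTop_nat 1))
      ((tendsto_const_nhds.add (hlim.mul hlim)).const_smul _)
  have hy_sa : IsSelfAdjoint y :=
    (isClosed_eq continuous_star continuous_id).mem_of_tendsto hlim
      (.of_forall (IsSelfAdjoint.sqrtIter ha_sa))
  have hy_norm : ‖y‖ ≤ 1 := le_of_tendsto' hlim.norm fun k =>
    (norm_le_tnorm _).trans ((tnorm_sqrtIter_le ha hat k).trans (by norm_num))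
  refine ⟨1 - y, memE.one.sub hyE, hy_sa.isPositive_one_sub hy_norm, ?_, fun p hp =>
    (hp.one_sub_le hyE).trans (hp.le_of_tendsto hiterE hyE hy (hp.sqrtIter_le ha hat))⟩
  have h2y : (2 : ℂ) • y = a + y * y := by
    conv_lhs => rw [hfix]
    rw [smul_smul, mul_inv_cancel₀ two_ne_zero, one_smul]
  calc (1 - y) * (1 - y) = 1 - (2 : ℂ) • y + y * y := by rw [two_smul]; noncomm_ring
    _ = 1 - a := by rw [h2y]; abel

end SqrtIter

theorem exists_sqrt_of_tnorm_sub_le {G : Op H} (hG : IsSelfAdjoint G) (hGE : memE I τ G)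
    (hGt : tnorm I τ (G - (3 / 2 : ℂ) • 1) ≤ 1) :
    ∃ S, S.IsPositive ∧ S * S = G ∧ memE I τ S ∧
      ∀ p, IsLeibnizSeminorm I τ p → p S ≤ p G := by
  have ha : 1 - (2 / 3 : ℂ) • G = (-(2 / 3) : ℂ) • (G - (3 / 2 : ℂ) • 1) := by
    rw [smul_sub, smul_smul]; norm_num; abel
  have hat : tnorm I τ (1 - (2 / 3 : ℂ) • G) ≤ 3 / 4 := by
    rw [ha, tnorm_smul]
    rw [show ‖(-(2 / 3) : ℂ)‖ = 2 / 3 by simp]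
    linarith
  obtain ⟨R, hRE, hR, hRR, hRp⟩ := exists_sqrt_one_sub (memE.one.sub (hGE.smul _))
    ((IsSelfAdjoint.one _).sub (.smul (by simp [IsSelfAdjoint]) hG)) hat
  set c : ℝ := √(3 / 2)
  have hc0 : 0 ≤ c := Real.sqrt_nonneg _
  have hc : c * c = 3 / 2 := Real.mul_self_sqrt (by norm_num)
  refine ⟨(c : ℂ) • R, hR.smul_of_nonneg (by exact_mod_cast hc0), ?_, hRE.smul _,
    fun p hp => ?_⟩
  · rw [smul_mul_smul_comm, hRR, sub_sub_cancel, smul_smul, ← Complex.ofReal_mul, hc]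
    norm_num
  · have h1 : p (1 - (2 / 3 : ℂ) • G) ≤ 2 / 3 * p G := by
      simpa using (hp.one_sub_le (hGE.smul (2 / 3))).trans_eq (hp.smul _ G)
    have hc1 : c * (2 / 3) ≤ 1 := by nlinarith
    rw [hp.smul, Complex.norm_real, Real.norm_of_nonneg hc0]
    calc c * p R ≤ c * (2 / 3 * p G) := by gcongr; exact (hRp p hp).trans h1
      _ ≤ p G := by nlinarith [hp.nonneg G]

/-- Lemma 3.1: for hermitian `G ∈ E(τ;I)` with `|||G - (3/2)I||| ≤ 1`,
the (unique positive) square root `G^{1/2}` lies in `E(τ;I)`, and there is a universal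
constant `C` with `|||[G^{1/2},X]||| ≤ C |||[G,X]|||` and `|[G^{1/2},τ]|_I ≤ C |[G,τ]|_I`. -/
theorem statement6 :
    ∃ C : ℝ, ∀ (H : Type) [NormedAddCommGroup H] [InnerProductSpace ℂ H] [CompleteSpace H]
      [TopologicalSpace.SeparableSpace H], ¬ FiniteDimensional ℂ H →
      ∀ (n : ℕ) (τ : Fin n → Op H), (∀ j, IsSelfAdjoint (τ j)) →
      ∀ (I : SymmNormedIdeal H) (G : Op H), IsSelfAdjoint G → memE I τ G →
        tnorm I τ (G - (3/2 : ℂ) • (1 : Op H)) ≤ 1 →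
        (∃ S : Op H, S.IsPositive ∧ S * S = G) ∧
        (∀ S : Op H, S.IsPositive → S * S = G →
          memE I τ S ∧ commNrm I τ S ≤ C * commNrm I τ G ∧
          ∀ X : Op H, memE I τ X →
            tnorm I τ (S * X - X * S) ≤ C * tnorm I τ (G * X - X * G)) := by
  refine ⟨1, fun H _ _ _ _ _ n τ _ I G hG hGE hGt => ?_⟩
  obtain ⟨S₀, hS₀, hS₀G, hS₀E, hp⟩ := exists_sqrt_of_tnorm_sub_le hG hGE hGt
  refine ⟨⟨S₀, hS₀, hS₀G⟩, fun S hS hSG => ?_⟩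
  obtain rfl : S = S₀ := hS.eq_of_mul_self_eq hS₀ (hSG.trans hS₀G.symm)
  simp only [one_mul]
  exact ⟨hS₀E, hp _ isLeibnizSeminorm_commNrm,
    fun X hX => hp _ (isLeibnizSeminorm_tnorm_comm hX)⟩
end
end

section
/- Let (Q_s)_{s≥0} be a sequence of mutually orthogonal projections on H with Σ_{s≥0} Q_s = I (in the strong operator topology), and let X ∈ B(H) be block-tridiagonal with respect to this decomposition, i.e. Q_s X Q_t = 0 whenever |s − t| ≥ 2. For N ≥ 1 let B = Q_0 + Σ_{1≤s≤N} (1 − (s−1)/N) Q_s. Then ‖[B, X]‖ ≤ 2 N^{-1} ‖X‖. -/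
noncomputable section

open Filter Topology

variable {H : Type} [NormedAddCommGroup H] [InnerProductSpace ℂ H] [CompleteSpace H]

variable {n : ℕ}

/-!
Write `B = ∑ₛ cₛ Qₛ`. Compressing by the projections, `Qᵢ [B, X] Qⱼ = (cᵢ - cⱼ) Qᵢ X Qⱼ`, which
vanishes unless `|i - j| = 1` since `X` is block-tridiagonal. Hence `[B, X]` is the sum of its
block-superdiagonal part `∑ₛ (cₛ - cₛ₊₁) Qₛ X Qₛ₊₁` and its block-subdiagonal part. By Pythagoras
and Bessel's inequality for the orthogonal ranges of the `Qₛ`, an operator of the form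
`∑ₖ aₖ Q_{f k} X Q_{g k}` with `f`, `g` injective has norm at most `maxₖ |aₖ| ‖X‖`. For the
coefficients of the statement `|cₛ - cₛ₊₁| ≤ 1/N`, so each part has norm at most `‖X‖ / N`.
-/

open Finset
open scoped InnerProductSpace

variable {𝕜 E ι : Type*} [RCLike 𝕜] [NormedAddCommGroup E] [InnerProductSpace 𝕜 E]

theorem norm_sum_sq_of_pairwise_inner_eq_zero (S : Finset ι) (u : ι → E)
    (hu : (S : Set ι).Pairwise fun i j => ⟪u i, u j⟫_𝕜 = 0) :
    ‖∑ i ∈ S, u i‖ ^ 2 = ∑ i ∈ S, ‖u i‖ ^ 2 := by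
  have hdiag : ⟪∑ i ∈ S, u i, ∑ i ∈ S, u i⟫_𝕜 = ∑ i ∈ S, ⟪u i, u i⟫_𝕜 := by
    rw [sum_inner]
    refine sum_congr rfl fun i hi => ?_
    rw [inner_sum, sum_eq_single i (fun j hj hji => hu hi hj hji.symm) (absurd hi)]
  rw [← inner_self_eq_norm_sq (𝕜 := 𝕜), hdiag, map_sum]
  exact sum_congr rfl fun i _ => inner_self_eq_norm_sq _

section Projections

variable [CompleteSpace E]

theorem IsSelfAdjoint.inner_apply_apply_eq_zero {P R : E →L[𝕜] E} (hP : IsSelfAdjoint P)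
    (hPR : P * R = 0) (x y : E) : ⟪P x, R y⟫_𝕜 = 0 := by
  rw [← ContinuousLinearMap.adjoint_inner_right, hP.adjoint_eq, ← mul_apply_eq_comp, hPR,
    zero_apply, inner_zero_right]

theorem IsStarProjection.norm_apply_le {P : E →L[𝕜] E} (hP : IsStarProjection P) (x : E) :
    ‖P x‖ ≤ ‖x‖ := by
  simpa using P.le_of_opNorm_le (hP.norm_le P) x

variable {Q : ι → E →L[𝕜] E} (hQ : ∀ i, IsStarProjection (Q i))
  (hQorth : Pairwise fun i j => Q i * Q j = 0)
include hQ hQorth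

theorem isStarProjection_sum (S : Finset ι) : IsStarProjection (∑ i ∈ S, Q i) := by
  classical
  induction S using Finset.induction_on with
  | empty => simp
  | insert i S hi ih =>
    rw [sum_insert hi]
    refine (hQ i).add ih ?_
    rw [mul_sum]
    exact sum_eq_zero fun j hj => hQorth (ne_of_mem_of_not_mem hj hi).symm

theorem sum_norm_sq_apply_le (S : Finset ι) (x : E) : ∑ i ∈ S, ‖Q i x‖ ^ 2 ≤ ‖x‖ ^ 2 := by
  rw [← norm_sum_sq_of_pairwise_inner_eq_zero (𝕜 := 𝕜) S _ fun i _ j _ hij =>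
    (hQ i).isSelfAdjoint.inner_apply_apply_eq_zero (hQorth hij) x x, ← _root_.sum_apply]
  gcongr
  exact (isStarProjection_sum hQ hQorth S).norm_apply_le x

theorem norm_sum_smul_mul_mul_le {κ : Type*} (S : Finset κ) {f g : κ → ι}
    (hf : Set.InjOn f S) (hg : Set.InjOn g S) (a : κ → 𝕜) {C : ℝ} (hC : 0 ≤ C)
    (ha : ∀ k ∈ S, ‖a k‖ ≤ C) (X : E →L[𝕜] E) :
    ‖∑ k ∈ S, a k • (Q (f k) * X * Q (g k))‖ ≤ C * ‖X‖ := by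
  classical
  refine ContinuousLinearMap.opNorm_le_bound _ (by positivity) fun x => ?_
  set v : κ → E := fun k => a k • X (Q (g k) x)
  have happly : (∑ k ∈ S, a k • (Q (f k) * X * Q (g k))) x = ∑ k ∈ S, Q (f k) (v k) := by
    simp [v, _root_.sum_apply]
  have hterm : ∀ k ∈ S, ‖Q (f k) (v k)‖ ^ 2 ≤ (C * ‖X‖) ^ 2 * ‖Q (g k) x‖ ^ 2 := by
    intro k hk
    rw [← mul_pow]
    gcongr
    calc ‖Q (f k) (v k)‖ ≤ ‖v k‖ := (hQ _).norm_apply_le _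
      _ ≤ C * (‖X‖ * ‖Q (g k) x‖) := by
        rw [norm_smul]
        gcongr
        exacts [ha k hk, X.le_opNorm _]
      _ = C * ‖X‖ * ‖Q (g k) x‖ := by ring
  have hbessel : ∑ k ∈ S, ‖Q (g k) x‖ ^ 2 ≤ ‖x‖ ^ 2 := by
    rw [← sum_image (f := fun i => ‖Q i x‖ ^ 2) hg]
    exact sum_norm_sq_apply_le hQ hQorth _ x
  rw [happly, ← sq_le_sq₀ (norm_nonneg _) (by positivity),
    norm_sum_sq_of_pairwise_inner_eq_zero (𝕜 := 𝕜) S _ fun j hj k hk hjk =>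
      (hQ _).isSelfAdjoint.inner_apply_apply_eq_zero (hQorth (hf.ne hj hk hjk)) _ _]
  calc ∑ k ∈ S, ‖Q (f k) (v k)‖ ^ 2 ≤ ∑ k ∈ S, (C * ‖X‖) ^ 2 * ‖Q (g k) x‖ ^ 2 :=
        sum_le_sum hterm
    _ ≤ (C * ‖X‖) ^ 2 * ‖x‖ ^ 2 := by rw [← mul_sum]; gcongr
    _ = (C * ‖X‖ * ‖x‖) ^ 2 := by ring

theorem mul_mul_mul_mul_eq_ite [DecidableEq ι] (i j k l : ι) (Y : E →L[𝕜] E) :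
    Q i * (Q k * Y * Q l) * Q j = if i = k ∧ l = j then Q i * Y * Q j else 0 := by
  have hmul : ∀ i j, Q i * Q j = if i = j then Q i else 0 := fun i j => by
    split_ifs with h
    · rw [h, (hQ j).isIdempotentElem.eq]
    · exact hQorth h
  calc Q i * (Q k * Y * Q l) * Q j = Q i * Q k * Y * (Q l * Q j) := by simp only [mul_assoc]
    _ = _ := by
      rw [hmul i k, hmul l j]
      split_ifs <;> simp_all

section Diagonal

variable {S : Finset ι} {c : ι → 𝕜} (hc : ∀ i ∉ S, c i = 0)
include hc

theorem sum_smul_mul_eq_smul (j : ι) : (∑ i ∈ S, c i • Q i) * Q j = c j • Q j := by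
  simp_rw [sum_mul, smul_mul_assoc]
  rw [sum_eq_single j (fun i _ hij => by rw [hQorth hij, smul_zero])
    (fun hj => by rw [hc j hj, zero_smul]), (hQ j).isIdempotentElem.eq]

theorem mul_sum_smul_eq_smul (j : ι) : Q j * (∑ i ∈ S, c i • Q i) = c j • Q j := by
  simp_rw [mul_sum, mul_smul_comm]
  rw [sum_eq_single j (fun i _ hij => by rw [hQorth (Ne.symm hij), smul_zero])
    (fun hj => by rw [hc j hj, zero_smul]), (hQ j).isIdempotentElem.eq]

theorem mul_commutator_mul (X : E →L[𝕜] E) (i j : ι) :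
    Q i * ((∑ s ∈ S, c s • Q s) * X - X * ∑ s ∈ S, c s • Q s) * Q j =
      (c i - c j) • (Q i * X * Q j) := by
  calc _ = Q i * (∑ s ∈ S, c s • Q s) * X * Q j - Q i * X * ((∑ s ∈ S, c s • Q s) * Q j) := by
        simp only [mul_sub, sub_mul, mul_assoc]
    _ = _ := by
      rw [mul_sum_smul_eq_smul hQ hQorth hc, sum_smul_mul_eq_smul hQ hQorth hc, smul_mul_assoc,
        smul_mul_assoc, mul_smul_comm, sub_smul]

end Diagonal

end Projections

section Sequence

variable {Q : ℕ → E →L[𝕜] E}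
  (hQsum : ∀ x, Tendsto (fun n => (∑ s ∈ range n, Q s) x) atTop (𝓝 x))

section Completeness

include hQsum

theorem eq_of_forall_mul_proj_eq {A B : E →L[𝕜] E} (h : ∀ t, A * Q t = B * Q t) : A = B := by
  ext x
  have hsum : ∀ n, A * ∑ s ∈ range n, Q s = B * ∑ s ∈ range n, Q s :=
    fun n => by simp only [mul_sum, h]
  refine tendsto_nhds_unique ((A.continuous.tendsto x).comp (hQsum x)) ?_
  convert (B.continuous.tendsto x).comp (hQsum x) using 1
  funext n
  exact DFunLike.congr_fun (hsum n) x

theorem eq_of_forall_proj_mul_eq {A B : E →L[𝕜] E} (h : ∀ s, Q s * A = Q s * B) : A = B := by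
  ext x
  have hsum : ∀ n, (∑ s ∈ range n, Q s) * A = (∑ s ∈ range n, Q s) * B :=
    fun n => by simp only [sum_mul, h]
  refine tendsto_nhds_unique (hQsum (A x)) ?_
  convert hQsum (B x) using 1
  funext n
  exact DFunLike.congr_fun (hsum n) x

theorem eq_of_forall_proj_mul_mul_proj_eq {A B : E →L[𝕜] E}
    (h : ∀ s t, Q s * A * Q t = Q s * B * Q t) : A = B :=
  eq_of_forall_mul_proj_eq hQsum fun t =>
    eq_of_forall_proj_mul_eq hQsum fun s => by simpa only [mul_assoc] using h s t

end Completeness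

variable [CompleteSpace E] (hQ : ∀ i, IsStarProjection (Q i))
  (hQorth : Pairwise fun i j => Q i * Q j = 0)
include hQ hQorth

section Shift

variable {M : ℕ} {d : ℕ → 𝕜} (hd : ∀ s, M ≤ s → d s = 0)
include hd

theorem mul_sum_smul_mul_mul_succ_mul (X : E →L[𝕜] E) (i j : ℕ) :
    Q i * (∑ s ∈ range M, d s • (Q s * X * Q (s + 1))) * Q j =
      if j = i + 1 then d i • (Q i * X * Q j) else 0 := by
  simp only [mul_sum, sum_mul, mul_smul_comm, smul_mul_assoc, mul_mul_mul_mul_eq_ite hQ hQorth]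
  split_ifs with hj
  · subst hj
    rw [sum_eq_single i (fun s _ hs => by simp [Ne.symm hs])
      fun hi => by rw [hd i (by simpa using hi), zero_smul]]
    simp
  · exact sum_eq_zero fun s _ => by rw [if_neg (by omega), smul_zero]

theorem mul_sum_smul_mul_succ_mul_mul (X : E →L[𝕜] E) (i j : ℕ) :
    Q i * (∑ s ∈ range M, d s • (Q (s + 1) * X * Q s)) * Q j =
      if i = j + 1 then d j • (Q i * X * Q j) else 0 := by
  simp only [mul_sum, sum_mul, mul_smul_comm, smul_mul_assoc, mul_mul_mul_mul_eq_ite hQ hQorth]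
  split_ifs with hi
  · subst hi
    rw [sum_eq_single j (fun s _ hs => by simp [hs])
      fun hj => by rw [hd j (by simpa using hj), zero_smul]]
    simp
  · exact sum_eq_zero fun s _ => by rw [if_neg (by omega), smul_zero]

end Shift

variable {X : E →L[𝕜] E} (hX : ∀ s t : ℕ, (s + 2 ≤ t ∨ t + 2 ≤ s) → Q s * X * Q t = 0)
  {M : ℕ} {c : ℕ → 𝕜} (hc : ∀ s, M ≤ s → c s = 0)
include hQsum hX hc

theorem commutator_eq_of_tridiagonal :
    (∑ s ∈ range M, c s • Q s) * X - X * ∑ s ∈ range M, c s • Q s =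
      ∑ s ∈ range M, (c s - c (s + 1)) • (Q s * X * Q (s + 1)) +
        ∑ s ∈ range M, (c (s + 1) - c s) • (Q (s + 1) * X * Q s) := by
  have hvan : ∀ s, M ≤ s → c s = 0 ∧ c (s + 1) = 0 := fun s hs => ⟨hc s hs, hc (s + 1) (by omega)⟩
  refine eq_of_forall_proj_mul_mul_proj_eq hQsum fun i j => ?_
  rw [mul_commutator_mul hQ hQorth (fun s hs => hc s (by simpa using hs)), mul_add, add_mul,
    mul_sum_smul_mul_mul_succ_mul hQ hQorth (fun s hs => by simp [hvan s hs]),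
    mul_sum_smul_mul_succ_mul_mul hQ hQorth (fun s hs => by simp [hvan s hs])]
  rcases (by omega : j = i + 1 ∨ i = j + 1 ∨ i = j ∨ (i + 2 ≤ j ∨ j + 2 ≤ i)) with
    rfl | rfl | rfl | hfar
  · simp [show i ≠ i + 1 + 1 by omega]
  · simp [show j ≠ j + 1 + 1 by omega]
  · simp
  · simp [hX i j hfar]

theorem norm_commutator_le_of_tridiagonal {δ : ℝ} (hδ : ∀ s, ‖c s - c (s + 1)‖ ≤ δ) :
    ‖(∑ s ∈ range M, c s • Q s) * X - X * ∑ s ∈ range M, c s • Q s‖ ≤ 2 * δ * ‖X‖ := by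
  have hδ0 : 0 ≤ δ := (norm_nonneg _).trans (hδ 0)
  have hsuper : ‖∑ s ∈ range M, (c s - c (s + 1)) • (Q s * X * Q (s + 1))‖ ≤ δ * ‖X‖ :=
    norm_sum_smul_mul_mul_le hQ hQorth _ (fun _ _ _ _ h => h)
      (fun _ _ _ _ h => by simpa using h) _ hδ0 (fun s _ => hδ s) X
  have hsub : ‖∑ s ∈ range M, (c (s + 1) - c s) • (Q (s + 1) * X * Q s)‖ ≤ δ * ‖X‖ :=
    norm_sum_smul_mul_mul_le hQ hQorth _ (fun _ _ _ _ h => by simpa using h)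
      (fun _ _ _ _ h => h) _ hδ0 (fun s _ => by rw [norm_sub_rev]; exact hδ s) X
  rw [commutator_eq_of_tridiagonal hQsum hQ hQorth hX hc]
  linarith [norm_add_le (∑ s ∈ range M, (c s - c (s + 1)) • (Q s * X * Q (s + 1)))
    (∑ s ∈ range M, (c (s + 1) - c s) • (Q (s + 1) * X * Q s))]

end Sequence

-- The coefficient of `Q s` in `B`; clamping `1 - (s - 1) / N` to `[0, 1]` also gives the
-- coefficients `1` at `s = 0` and `0` beyond `N`, and keeps `s ↦ rampWeight N s` `1/N`-Lipschitz.
def rampWeight (N s : ℕ) : ℝ :=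
  Set.projIcc (0 : ℝ) 1 zero_le_one (1 - ((s : ℝ) - 1) / N)

theorem rampWeight_zero (N : ℕ) : rampWeight N 0 = 1 := by
  rw [rampWeight, Set.projIcc_of_right_le]
  simp only [Nat.cast_zero, zero_sub, neg_div, sub_neg_eq_add, le_add_iff_nonneg_right]
  positivity

theorem rampWeight_of_mem_Icc {N s : ℕ} (hs : s ∈ Icc 1 N) :
    rampWeight N s = 1 - ((s : ℝ) - 1) / N := by
  obtain ⟨h1, h2⟩ := mem_Icc.mp hs
  have hN : (0 : ℝ) < N := by exact_mod_cast (by omega : 0 < N)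
  rw [rampWeight, Set.projIcc_of_mem]
  constructor
  · rw [sub_nonneg, div_le_one hN]
    have : (s : ℝ) ≤ N := by exact_mod_cast h2
    linarith
  · rw [sub_le_self_iff]
    have : (1 : ℝ) ≤ s := by exact_mod_cast h1
    exact div_nonneg (by linarith) hN.le

theorem rampWeight_eq_zero {N s : ℕ} (hN : 1 ≤ N) (hs : N + 1 ≤ s) : rampWeight N s = 0 := by
  have hN' : (0 : ℝ) < N := by exact_mod_cast hN
  rw [rampWeight, Set.projIcc_of_le_left]
  rw [sub_nonpos, one_le_div hN']
  have : (N : ℝ) + 1 ≤ s := by exact_mod_cast hs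
  linarith

theorem abs_rampWeight_sub_succ_le (N s : ℕ) :
    |rampWeight N s - rampWeight N (s + 1)| ≤ 1 / N := by
  refine (Set.abs_projIcc_sub_projIcc _).trans_eq ?_
  push_cast
  rw [show 1 - ((s : ℝ) - 1) / N - (1 - ((s : ℝ) + 1 - 1) / N) = 1 / N by ring, abs_of_nonneg]
  positivity

theorem statement15_general {H : Type} [NormedAddCommGroup H] [InnerProductSpace ℂ H]
    [CompleteSpace H]
    (Q : ℕ → Op H)
    (hQsa : ∀ s, IsSelfAdjoint (Q s)) (hQidem : ∀ s, Q s * Q s = Q s)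
    (hQorth : ∀ s t : ℕ, s ≠ t → Q s * Q t = 0)
    (hQsum : ∀ h : H, Tendsto (fun N => (∑ s ∈ Finset.range N, Q s) h) atTop (nhds h))
    (X : Op H)
    (hX : ∀ s t : ℕ, (s + 2 ≤ t ∨ t + 2 ≤ s) → Q s * X * Q t = 0)
    (N : ℕ) (hN : 1 ≤ N) :
    ‖(Q 0 + ∑ s ∈ Finset.Icc 1 N, ((1 - ((s : ℝ) - 1) / N : ℝ) : ℂ) • Q s) * X -
        X * (Q 0 + ∑ s ∈ Finset.Icc 1 N, ((1 - ((s : ℝ) - 1) / N : ℝ) : ℂ) • Q s)‖ ≤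
      2 / N * ‖X‖ := by
  have hB : Q 0 + ∑ s ∈ Icc 1 N, ((1 - ((s : ℝ) - 1) / N : ℝ) : ℂ) • Q s =
      ∑ s ∈ range (N + 1), (rampWeight N s : ℂ) • Q s := by
    rw [range_eq_Ico, sum_eq_sum_Ico_succ_bot (Nat.succ_pos N), rampWeight_zero,
      Complex.ofReal_one, one_smul, zero_add, Nat.succ_eq_add_one, Ico_add_one_right_eq_Icc]
    exact congrArg _ (sum_congr rfl fun s hs => by rw [rampWeight_of_mem_Icc hs])
  have hweight : ∀ s, ‖(rampWeight N s : ℂ) - rampWeight N (s + 1)‖ ≤ 1 / N := fun s => by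
    rw [← Complex.ofReal_sub, Complex.norm_real, Real.norm_eq_abs]
    exact abs_rampWeight_sub_succ_le N s
  rw [hB]
  calc _ ≤ 2 * (1 / N) * ‖X‖ :=
        norm_commutator_le_of_tridiagonal hQsum (fun s => ⟨hQidem s, hQsa s⟩) hQorth hX
          (fun s hs => by rw [rampWeight_eq_zero hN hs, Complex.ofReal_zero]) hweight
    _ = 2 / N * ‖X‖ := by ring

/-- the tridiagonal averaging estimate. -/
theorem statement15 {H : Type} [NormedAddCommGroup H] [InnerProductSpace ℂ H]
    [CompleteSpace H] [TopologicalSpace.SeparableSpace H]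
    (hinf : ¬ FiniteDimensional ℂ H)
    (Q : ℕ → Op H)
    (hQsa : ∀ s, IsSelfAdjoint (Q s)) (hQidem : ∀ s, Q s * Q s = Q s)
    (hQorth : ∀ s t : ℕ, s ≠ t → Q s * Q t = 0)
    (hQsum : ∀ h : H, Tendsto (fun N => (∑ s ∈ Finset.range N, Q s) h) atTop (nhds h))
    (X : Op H)
    (hX : ∀ s t : ℕ, (s + 2 ≤ t ∨ t + 2 ≤ s) → Q s * X * Q t = 0)
    (N : ℕ) (hN : 1 ≤ N) :
    ‖(Q 0 + ∑ s ∈ Finset.Icc 1 N, ((1 - ((s : ℝ) - 1) / N : ℝ) : ℂ) • Q s) * X -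
        X * (Q 0 + ∑ s ∈ Finset.Icc 1 N, ((1 - ((s : ℝ) - 1) / N : ℝ) : ℂ) • Q s)‖ ≤
      2 / N * ‖X‖ :=
  statement15_general Q hQsa hQidem hQorth hQsum X hX N hN
end
end

section
/- Let (R_k)_{k≥1} be positive operators on H with Σ_{k≥1} R_k² ≤ I (the partial sums increasing), and let (C_k)_{k≥1} be operators with ‖C_k‖ ≤ 1 for all k. Then the series Σ_{k≥1} R_k C_k R_k converges in the weak operator topology to an operator Y with ‖Y‖ ≤ 1. -/
/-! For a finite set `s` of indices, Cauchy–Schwarz (first in `H`, then in `ℝ^s`) gives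
`‖⟪∑_{k∈s} R_k C_k R_k x, v⟫‖ ≤ ∑_{k∈s} ‖R_k x‖ ‖R_k v‖ ≤ (∑_{k∈s} ‖R_k x‖²)^{1/2} ‖v‖`,
because `∑ R_k² ≤ 1` is the Bessel-type inequality `∑ ‖R_k v‖² ≤ ‖v‖²`.
Taking `v` to be the sum itself, the tails of `∑ R_k C_k R_k x` are dominated by those of the
convergent series `∑ ‖R_k x‖²`, so the series converges in norm, and its sum is a contraction. -/

noncomputable section

open Filter Topology

variable {H : Type} [NormedAddCommGroup H] [InnerProductSpace ℂ H] [CompleteSpace H]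

variable {n : ℕ}

open scoped InnerProductSpace

namespace ContinuousLinearMap

variable {𝕜 E : Type*} [RCLike 𝕜] [NormedAddCommGroup E] [InnerProductSpace 𝕜 E]

lemma re_inner_sq_apply_self {R : E →L[𝕜] E} (hR : R.IsSymmetric) (x : E) :
    RCLike.re ⟪(R ^ 2) x, x⟫_𝕜 = ‖R x‖ ^ 2 := by
  rw [sq, mul_apply_eq_comp, hR.apply_clm, inner_self_eq_norm_sq]

lemma sum_norm_sq_apply_le {ι : Type*} {s : Finset ι} {R : ι → E →L[𝕜] E}
    (hR : ∀ k ∈ s, (R k).IsSymmetric) (h : (1 - ∑ k ∈ s, R k ^ 2).IsPositive) (x : E) :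
    ∑ k ∈ s, ‖R k x‖ ^ 2 ≤ ‖x‖ ^ 2 := by
  have := h.re_inner_nonneg_left x
  rw [sub_apply, one_apply_eq_self, inner_sub_left, map_sub, inner_self_eq_norm_sq, sum_apply,
    sum_inner, map_sum, Finset.sum_congr rfl fun k hk => re_inner_sq_apply_self (hR k hk) x] at this
  linarith

lemma norm_inner_mul_mul_apply_le {R : E →L[𝕜] E} (hR : R.IsSymmetric) (C : E →L[𝕜] E)
    (x y : E) : ‖⟪(R * C * R) x, y⟫_𝕜‖ ≤ ‖C‖ * (‖R x‖ * ‖R y‖) :=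
  calc ‖⟪(R * C * R) x, y⟫_𝕜‖ = ‖⟪C (R x), R y⟫_𝕜‖ := by
        rw [mul_apply_eq_comp, mul_apply_eq_comp, hR.apply_clm]
    _ ≤ ‖C (R x)‖ * ‖R y‖ := norm_inner_le_norm _ _
    _ ≤ ‖C‖ * ‖R x‖ * ‖R y‖ := by gcongr; exact C.le_opNorm _
    _ = ‖C‖ * (‖R x‖ * ‖R y‖) := mul_assoc _ _ _

lemma norm_sum_mul_mul_apply_le {ι : Type*} {s : Finset ι} {R C : ι → E →L[𝕜] E}
    (hR : ∀ k ∈ s, (R k).IsSymmetric) (hC : ∀ k ∈ s, ‖C k‖ ≤ 1)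
    (hbessel : ∀ y, ∑ k ∈ s, ‖R k y‖ ^ 2 ≤ ‖y‖ ^ 2) (x : E) :
    ‖∑ k ∈ s, (R k * C k * R k) x‖ ≤ √(∑ k ∈ s, ‖R k x‖ ^ 2) := by
  set v := ∑ k ∈ s, (R k * C k * R k) x
  set c := √(∑ k ∈ s, ‖R k x‖ ^ 2)
  have hv : ‖v‖ ^ 2 ≤ c * ‖v‖ :=
    calc ‖v‖ ^ 2 = RCLike.re ⟪v, v⟫_𝕜 := (inner_self_eq_norm_sq v).symm
      _ ≤ ‖⟪v, v⟫_𝕜‖ := RCLike.re_le_norm _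
      _ = ‖∑ k ∈ s, ⟪(R k * C k * R k) x, v⟫_𝕜‖ := by rw [← sum_inner]
      _ ≤ ∑ k ∈ s, ‖⟪(R k * C k * R k) x, v⟫_𝕜‖ := norm_sum_le _ _
      _ ≤ ∑ k ∈ s, ‖R k x‖ * ‖R k v‖ := Finset.sum_le_sum fun k hk =>
          (norm_inner_mul_mul_apply_le (hR k hk) _ x v).trans
            (mul_le_of_le_one_left (by positivity) (hC k hk))
      _ ≤ c * √(∑ k ∈ s, ‖R k v‖ ^ 2) := Real.sum_mul_le_sqrt_mul_sqrt _ _ _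
      _ ≤ c * ‖v‖ := by
          gcongr
          exact Real.sqrt_le_iff.2 ⟨norm_nonneg v, hbessel v⟩
  nlinarith [norm_nonneg v, Real.sqrt_nonneg (∑ k ∈ s, ‖R k x‖ ^ 2)]

section Series

variable {R C : ℕ → E →L[𝕜] E}

lemma sum_norm_sq_apply_le_of_isPositive_range (hR : ∀ k, (R k).IsSymmetric)
    (hsum : ∀ N, (1 - ∑ k ∈ Finset.range N, R k ^ 2).IsPositive) (s : Finset ℕ) (x : E) :
    ∑ k ∈ s, ‖R k x‖ ^ 2 ≤ ‖x‖ ^ 2 := by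
  obtain ⟨N, hsN⟩ := s.exists_nat_subset_range
  exact (Finset.sum_le_sum_of_subset_of_nonneg hsN fun _ _ _ => by positivity).trans
    (sum_norm_sq_apply_le (fun k _ => hR k) (hsum N) x)

variable [CompleteSpace E] (hR : ∀ k, (R k).IsSymmetric)
    (hsum : ∀ N, (1 - ∑ k ∈ Finset.range N, R k ^ 2).IsPositive) (hC : ∀ k, ‖C k‖ ≤ 1)
include hR hsum hC

lemma summable_mul_mul_apply (x : E) : Summable fun k => (R k * C k * R k) x := by
  have hbessel := sum_norm_sq_apply_le_of_isPositive_range hR hsum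
  have hsq : Summable fun k => ‖R k x‖ ^ 2 :=
    summable_of_sum_range_le (fun _ => by positivity) fun N => hbessel _ x
  refine summable_iff_vanishing_norm.2 fun ε hε => ?_
  obtain ⟨s, hs⟩ := summable_iff_vanishing_norm.1 hsq (ε ^ 2) (by positivity)
  refine ⟨s, fun t ht => (norm_sum_mul_mul_apply_le (fun k _ => hR k) (fun k _ => hC k)
    (hbessel t) x).trans_lt ?_⟩
  have := hs t ht
  rw [Real.norm_of_nonneg (by positivity)] at this
  exact Real.sqrt_lt' hε |>.2 this

theorem exists_hasSum_mul_mul_apply :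
    ∃ Y : E →L[𝕜] E, ‖Y‖ ≤ 1 ∧ ∀ x, HasSum (fun k => (R k * C k * R k) x) (Y x) := by
  have hbessel := sum_norm_sq_apply_le_of_isPositive_range hR hsum
  have hY (x : E) := (summable_mul_mul_apply hR hsum hC x).hasSum
  have hlim : Tendsto (fun N x => (∑ k ∈ Finset.range N, R k * C k * R k) x) atTop
      (𝓝 fun x => ∑' k, (R k * C k * R k) x) := by
    simpa only [tendsto_pi_nhds, sum_apply] using fun x => (hY x).tendsto_sum_nat
  have hbound (x : E) : ‖∑' k, (R k * C k * R k) x‖ ≤ 1 * ‖x‖ := by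
    rw [one_mul]
    refine le_of_tendsto' (hY x).norm fun s => ?_
    exact (norm_sum_mul_mul_apply_le (fun k _ => hR k) (fun k _ => hC k) (hbessel s) x).trans
      (Real.sqrt_le_iff.2 ⟨norm_nonneg x, hbessel s x⟩)
  exact ⟨(linearMapOfTendsto _ (fun N => ↑(∑ k ∈ Finset.range N, R k * C k * R k)) hlim
    |>.mkContinuous 1 hbound), LinearMap.mkContinuous_norm_le _ zero_le_one _, hY⟩

end Series

end ContinuousLinearMap

theorem statement16_general {H : Type} [NormedAddCommGroup H] [InnerProductSpace ℂ H]
    [CompleteSpace H]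
    (R C : ℕ → Op H)
    (hR : ∀ k, (R k).IsPositive)
    (hsum : ∀ N : ℕ, ((1 : Op H) - ∑ k ∈ Finset.range N, R k ^ 2).IsPositive)
    (hC : ∀ k, ‖C k‖ ≤ 1) :
    ∃ Y : Op H, ‖Y‖ ≤ 1 ∧ ∀ x y : H,
      Tendsto (fun N => (inner ℂ ((∑ k ∈ Finset.range N, R k * C k * R k) x) y : ℂ))
        atTop (nhds (inner ℂ (Y x) y : ℂ)) := by
  obtain ⟨Y, hY, hasSum_Y⟩ :=
    ContinuousLinearMap.exists_hasSum_mul_mul_apply (fun k => (hR k).isSymmetric) hsum hC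
  refine ⟨Y, hY, fun x y => ?_⟩
  simpa only [sum_apply] using
    (hasSum_Y x).tendsto_sum_nat.inner tendsto_const_nhds

/-- the glueing estimate. -/
theorem statement16 {H : Type} [NormedAddCommGroup H] [InnerProductSpace ℂ H]
    [CompleteSpace H] [TopologicalSpace.SeparableSpace H]
    (hinf : ¬ FiniteDimensional ℂ H)
    (R C : ℕ → Op H)
    (hR : ∀ k, (R k).IsPositive)
    (hsum : ∀ N : ℕ, ((1 : Op H) - ∑ k ∈ Finset.range N, R k ^ 2).IsPositive)
    (hC : ∀ k, ‖C k‖ ≤ 1) :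
    ∃ Y : Op H, ‖Y‖ ≤ 1 ∧ ∀ x y : H,
      Tendsto (fun N => (inner ℂ ((∑ k ∈ Finset.range N, R k * C k * R k) x) y : ℂ))
        atTop (nhds (inner ℂ (Y x) y : ℂ)) :=
  statement16_general R C hR hsum hC
end
end
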